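/- arXiv:1907.03844 — 3 statements merged into one kernel-verified Lean document; each statement's English description precedes it below -/
import Mathlib

section
/- Let Z be a finite set of cardinality 2n with n ≥ 1 and let {X, Y} be a splitting of Z. Then S(X,Y) is a normal subgroup of W(X,Y), and moreover the normalizer of S(X,Y) in Perm(Z) equals W(X,Y). -/
/-- A subgroup of `Equiv.Perm Z` is regular if it acts transitively and
no non-identity element has a fixed point. -/
def IsRegularSubgroup {Z : Type*} (N : Subgroup (Equiv.Perm Z)) : Prop :=
  (∀ z w : Z, ∃ σ ∈ N, σ z = w) ∧ ∀ σ ∈ N, σ ≠ 1 → ∀ z : Z, σ z ≠ z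

/-- The wreath-product subgroup `W(X, Y)` (with `Y = Xᶜ`): all permutations that
either fix both `X` and `Y` setwise, or interchange them. -/
def wprod {Z : Type*} (X : Set Z) : Subgroup (Equiv.Perm Z) where
  carrier := {w | (w '' X = X ∧ w '' Xᶜ = Xᶜ) ∨ (w '' X = Xᶜ ∧ w '' Xᶜ = X)}
  one_mem' := by simp
  mul_mem' := by
    rintro a b (⟨ha1, ha2⟩ | ⟨ha1, ha2⟩) (⟨hb1, hb2⟩ | ⟨hb1, hb2⟩) <;>
      simp only [Set.mem_setOf_eq, Equiv.Perm.coe_mul, Set.image_comp, hb1, hb2, ha1, ha2] <;>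
      tauto
  inv_mem' := by
    intro a h
    have key : ∀ S T : Set Z, a '' S = T → (a⁻¹ : Equiv.Perm Z) '' T = S := by
      intro S T hST
      rw [← hST, Set.image_image]
      simp
    rcases h with ⟨h1, h2⟩ | ⟨h1, h2⟩
    · exact Or.inl ⟨key _ _ h1, key _ _ h2⟩
    · exact Or.inr ⟨key _ _ h2, key _ _ h1⟩

/-- The image of the left regular representation `λ : G → Perm G`. -/
def leftRegRange (G : Type*) [Group G] : Subgroup (Equiv.Perm G) :=
  (MulAction.toPermHom G G).range

/-- `|Υ_n|`: number of units of exponent 2 mod `n`. -/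
noncomputable def upsilonCard (n : ℕ) : ℕ :=
  Nat.card {u : (ZMod n)ˣ // u ^ 2 = 1}

/-- The subgroup `S(X, Y) = B_X × B_Y` of permutations fixing `X` and `Y = Xᶜ` setwise. -/
def sprod {Z : Type*} (X : Set Z) : Subgroup (Equiv.Perm Z) where
  carrier := {w | w '' X = X ∧ w '' Xᶜ = Xᶜ}
  one_mem' := by simp
  mul_mem' := by
    rintro a b ⟨ha1, ha2⟩ ⟨hb1, hb2⟩
    constructor <;>
      simp only [Set.mem_setOf_eq, Equiv.Perm.coe_mul, Set.image_comp, hb1, hb2, ha1, ha2]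
  inv_mem' := by
    intro a h
    have key : ∀ S T : Set Z, a '' S = T → (a⁻¹ : Equiv.Perm Z) '' T = S := by
      intro S T hST
      rw [← hST, Set.image_image]
      simp
    exact ⟨key _ _ h.1, key _ _ h.2⟩


/-!
The transposition `(a b)` lies in `S(X, Y)` exactly when `a` and `b` lie on the same side of the
splitting, and conjugating it by `w` gives the transposition of `w a` and `w b`. Hence a
permutation normalising `S(X, Y)` preserves the relation "on the same side", i.e. it either
preserves or interchanges `X` and `Y`. Conversely, conjugation by such a permutation clearly
preserves `S(X, Y)`.
-/

open Equiv

section Splitting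

variable {Z : Type*} {X : Set Z}

theorem Equiv.Perm.image_eq_iff_forall_mem (w : Perm Z) (A B : Set Z) :
    w '' A = B ↔ ∀ z, w z ∈ B ↔ z ∈ A := by
  rw [← Equiv.eq_preimage_iff_image_eq, eq_comm, Set.ext_iff]
  rfl

theorem mem_sprod_iff {s : Perm Z} : s ∈ sprod X ↔ ∀ z, s z ∈ X ↔ z ∈ X := by
  change s '' X = X ∧ s '' Xᶜ = Xᶜ ↔ _
  simp only [Perm.image_eq_iff_forall_mem, Set.mem_compl_iff, not_iff_not, and_self]

theorem mem_wprod_iff {w : Perm Z} :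
    w ∈ wprod X ↔ (∀ z, w z ∈ X ↔ z ∈ X) ∨ ∀ z, w z ∈ X ↔ z ∉ X := by
  change (w '' X = X ∧ w '' Xᶜ = Xᶜ) ∨ (w '' X = Xᶜ ∧ w '' Xᶜ = X) ↔ _
  rw [Set.image_compl_eq w.bijective, compl_inj_iff, compl_eq_comm, eq_comm (a := Xᶜ), and_self,
    and_self, Perm.image_eq_iff_forall_mem, Perm.image_eq_iff_forall_mem]
  exact or_congr_right (forall_congr' fun _ => not_iff_comm.trans Iff.comm)

theorem sprod_le_wprod : sprod X ≤ wprod X := fun _ h => Or.inl h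

theorem swap_mem_sprod_iff [DecidableEq Z] {a b : Z} : swap a b ∈ sprod X ↔ (a ∈ X ↔ b ∈ X) := by
  rw [mem_sprod_iff]
  refine ⟨fun h => by simpa using (h a).symm, fun hab z => ?_⟩
  rw [swap_apply_def]
  split_ifs with hza hzb
  · subst hza; exact hab.symm
  · subst hzb; exact hab
  · rfl

theorem mul_mul_inv_mem_sprod {w s : Perm Z} (hw : w ∈ wprod X) (hs : s ∈ sprod X) :
    w * s * w⁻¹ ∈ sprod X := by
  rw [mem_sprod_iff] at hs ⊢
  intro z
  rcases mem_wprod_iff.1 hw with hw | hw <;>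
    simpa [hw, hs] using (hw (w⁻¹ z)).symm

instance sprod_subgroupOf_wprod_normal : ((sprod X).subgroupOf (wprod X)).Normal :=
  ⟨fun _ hs w => mul_mul_inv_mem_sprod w.2 hs⟩

theorem mem_wprod_of_mem_normalizer {w : Perm Z}
    (hw : w ∈ Subgroup.normalizer (sprod X : Set (Perm Z))) : w ∈ wprod X := by
  classical
  have same_side : ∀ a b, (w a ∈ X ↔ w b ∈ X) ↔ (a ∈ X ↔ b ∈ X) := fun a b => by
    rw [← swap_mem_sprod_iff, ← swap_mem_sprod_iff, swap_apply_apply]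
    exact (hw _).symm
  rw [mem_wprod_iff]
  by_cases h : ∀ z, w z ∈ X ↔ z ∈ X
  · exact Or.inl h
  · obtain ⟨z₀, hz₀⟩ := not_forall.1 h
    exact Or.inr fun z => by have := same_side z z₀; tauto

end Splitting

theorem sprod_normal_and_normalizer_general {Z : Type*} (X : Set Z) :
    ((sprod X).subgroupOf (wprod X)).Normal ∧ Subgroup.normalizer ((sprod X : Subgroup (Equiv.Perm Z)) : Set (Equiv.Perm Z)) = wprod X :=
  ⟨inferInstance, le_antisymm (fun _ => mem_wprod_of_mem_normalizer)
    (Subgroup.le_normalizer_of_normal_subgroupOf sprod_le_wprod)⟩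

/-- For a splitting `{X, Y}`, `S(X,Y)` is normal in `W(X,Y)` and its normalizer
in `Perm Z` is exactly `W(X,Y)`. -/
theorem sprod_normal_and_normalizer {Z : Type*} [Fintype Z] (n : ℕ) (hn : 1 ≤ n)
    (hZ : Fintype.card Z = 2 * n) (X : Set Z) (hX : X.ncard = n) (hXc : Xᶜ.ncard = n) :
    ((sprod X).subgroupOf (wprod X)).Normal ∧ Subgroup.normalizer ((sprod X : Subgroup (Equiv.Perm Z)) : Set (Equiv.Perm Z)) = wprod X :=
  sprod_normal_and_normalizer_general X
end

section
/- Let Z be a finite set, N ≤ B = Perm(Z) a regular subgroup, z₀ ∈ Z, and suppose K is a subgroup of N of index 2 with X = K·z₀ (the K-orbit of z₀) and Y = Z \ X, so that N ≤ W(X,Y). Then Norm_B(N) ≤ W(X,Y) if and only if K is a characteristic subgroup of N (i.e., K is mapped to itself by every automorphism of N). -/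
/-!
The orbit map `n ↦ n z₀` identifies the regular group `N` with `Z`, carrying `K` onto `X` and
the other coset `N \ K` onto `Y`.

If `K` is characteristic and `b` normalizes `N`, pick `τ ∈ N` with `τ z₀ = b z₀`; then
`b (n z₀) = (b n b⁻¹ τ) z₀`, and since conjugation by `b` preserves `K`, which has index 2,
`b (n z₀) ∈ X ↔ (n ∈ K ↔ τ ∈ K)`: `b` fixes or swaps `X` and `Y`.

Conversely, an automorphism `φ` of `N` transported along the orbit map is a permutation `b` with
`b n b⁻¹ = φ n`, so `b` normalizes `N`; it fixes `z₀ ∈ X`, so lying in `W(X, Y)` it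
stabilizes `X`, which says exactly that `φ` preserves `K`.
-/

open Equiv

lemma Subgroup.mul_mem_iff_of_relIndex_two {G : Type*} [Group G] {H K : Subgroup G}
    (h : H.relIndex K = 2) {a b : G} (ha : a ∈ K) (hb : b ∈ K) :
    a * b ∈ H ↔ (a ∈ H ↔ b ∈ H) := by
  simpa [mem_subgroupOf] using
    mul_mem_iff_of_index_two h (a := ⟨a, ha⟩) (b := ⟨b, hb⟩)

lemma Subgroup.Characteristic.conj_mem_iff {G : Type*} [Group G] {H K : Subgroup G}
    (hH : (H.subgroupOf K).Characteristic) {g : G} (hg : g ∈ normalizer (K : Set G))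
    {k : G} (hk : k ∈ K) : g * k * g⁻¹ ∈ H ↔ k ∈ H := by
  have h := SetLike.ext_iff.1
    (characteristic_iff_comap_eq.1 hH (K.normalizerMonoidHom ⟨g, hg⟩)) ⟨k, hk⟩
  simpa [mem_subgroupOf] using h

section

variable {Z : Type*}

lemma mem_wprod_iff_preimage (X : Set Z) (w : Perm Z) :
    w ∈ wprod X ↔ w ⁻¹' X = X ∨ w ⁻¹' X = Xᶜ := by
  have fix_iff : w '' X = X ↔ w ⁻¹' X = X := by rw [w.preimage_eq_iff_eq_image, eq_comm]
  have swap_iff : w '' X = Xᶜ ↔ w ⁻¹' X = Xᶜ := by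
    rw [w.preimage_eq_iff_eq_image, w.image_compl, eq_compl_comm]
  change (w '' X = X ∧ w '' Xᶜ = Xᶜ) ∨ (w '' X = Xᶜ ∧ w '' Xᶜ = X) ↔ _
  rw [w.image_compl, compl_inj_iff, compl_eq_comm, ← fix_iff, ← swap_iff]
  tauto

namespace IsRegularSubgroup

variable {N K : Subgroup (Perm Z)}

lemma eq_of_apply_eq (hN : IsRegularSubgroup N) {σ τ : Perm Z} (hσ : σ ∈ N) (hτ : τ ∈ N)
    {z : Z} (h : σ z = τ z) : σ = τ := by
  by_contra hne
  refine hN.2 (τ⁻¹ * σ) (mul_mem (inv_mem hτ) hσ) ?_ z (by simp [h])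
  rwa [Ne, inv_mul_eq_one, eq_comm]

noncomputable def orbitEquiv (hN : IsRegularSubgroup N) (z₀ : Z) : N ≃ Z :=
  ofBijective (fun n => (n : Perm Z) z₀)
    ⟨fun m n h => Subtype.ext (hN.eq_of_apply_eq m.2 n.2 h),
      fun z => let ⟨σ, hσ, hz⟩ := hN.1 z₀ z; ⟨⟨σ, hσ⟩, hz⟩⟩

@[simp]
lemma orbitEquiv_apply (hN : IsRegularSubgroup N) (z₀ : Z) (n : N) :
    hN.orbitEquiv z₀ n = (n : Perm Z) z₀ :=
  rfl

lemma apply_mem_image_iff (hN : IsRegularSubgroup N) (hKN : K ≤ N) (z₀ : Z) {σ : Perm Z}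
    (hσ : σ ∈ N) :
    σ z₀ ∈ (fun τ : Perm Z => τ z₀) '' (K : Set (Perm Z)) ↔ σ ∈ K :=
  ⟨fun ⟨_, hκ, h⟩ => hN.eq_of_apply_eq (hKN hκ) hσ h ▸ hκ, fun h => ⟨σ, h, rfl⟩⟩

noncomputable def permOfMulAut (hN : IsRegularSubgroup N) (z₀ : Z) (φ : N ≃* N) : Perm Z :=
  (hN.orbitEquiv z₀).permCongr φ.toEquiv

lemma permOfMulAut_apply_apply (hN : IsRegularSubgroup N) (z₀ : Z) (φ : N ≃* N) (n : N) :
    hN.permOfMulAut z₀ φ ((n : Perm Z) z₀) = (φ n : Perm Z) z₀ := by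
  rw [← orbitEquiv_apply hN z₀ n, permOfMulAut, permCongr_apply, symm_apply_apply]
  rfl

lemma permOfMulAut_apply_self (hN : IsRegularSubgroup N) (z₀ : Z) (φ : N ≃* N) :
    hN.permOfMulAut z₀ φ z₀ = z₀ := by
  simpa using hN.permOfMulAut_apply_apply z₀ φ 1

lemma conj_permOfMulAut (hN : IsRegularSubgroup N) (z₀ : Z) (φ : N ≃* N) (n : N) :
    MulAut.conj (hN.permOfMulAut z₀ φ) (n : Perm Z) = φ n := by
  rw [MulAut.conj_apply, mul_inv_eq_iff_eq_mul]
  ext z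
  obtain ⟨m, rfl⟩ := (hN.orbitEquiv z₀).surjective z
  rw [orbitEquiv_apply, Perm.mul_apply, Perm.mul_apply, ← Perm.mul_apply (n : Perm Z),
    ← Subgroup.coe_mul, permOfMulAut_apply_apply, permOfMulAut_apply_apply, map_mul,
    Subgroup.coe_mul, Perm.mul_apply]

lemma permOfMulAut_mem_normalizer (hN : IsRegularSubgroup N) (z₀ : Z) (φ : N ≃* N) :
    hN.permOfMulAut z₀ φ ∈ Subgroup.normalizer (N : Set (Perm Z)) := by
  rw [Subgroup.mem_normalizer_iff_map_conj_eq]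
  ext g
  refine ⟨?_, fun hg => ⟨φ.symm ⟨g, hg⟩, (φ.symm ⟨g, hg⟩).2, ?_⟩⟩
  · rintro ⟨n, hn, rfl⟩
    exact conj_permOfMulAut hN z₀ φ ⟨n, hn⟩ ▸ (φ ⟨n, hn⟩).2
  · exact (conj_permOfMulAut hN z₀ φ _).trans (congrArg Subtype.val (φ.apply_symm_apply _))

lemma subgroupOf_le_comap_of_permOfMulAut_mem_wprod (hN : IsRegularSubgroup N) (hKN : K ≤ N)
    (z₀ : Z) (φ : N ≃* N)
    (h : hN.permOfMulAut z₀ φ ∈ wprod ((fun τ : Perm Z => τ z₀) '' (K : Set (Perm Z)))) :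
    K.subgroupOf N ≤ (K.subgroupOf N).comap φ.toMonoidHom := by
  set X := (fun τ : Perm Z => τ z₀) '' (K : Set (Perm Z))
  have hz₀ : z₀ ∈ X := ⟨1, K.one_mem, rfl⟩
  have hX : hN.permOfMulAut z₀ φ ⁻¹' X = X := by
    refine ((mem_wprod_iff_preimage X _).1 h).resolve_right fun hswap => ?_
    have : z₀ ∈ hN.permOfMulAut z₀ φ ⁻¹' X := by
      rwa [Set.mem_preimage, permOfMulAut_apply_self]
    exact (hswap ▸ this) hz₀
  intro n hn
  rw [Subgroup.mem_comap, Subgroup.mem_subgroupOf, MulEquiv.coe_toMonoidHom,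
    ← hN.apply_mem_image_iff hKN z₀ (φ n).2, ← hN.permOfMulAut_apply_apply z₀ φ n,
    ← Set.mem_preimage, hX, hN.apply_mem_image_iff hKN z₀ n.2]
  exact hn

lemma mem_wprod_of_conj_mem_iff (hN : IsRegularSubgroup N) (hKN : K ≤ N)
    (hKidx : K.relIndex N = 2) (z₀ : Z) {b : Perm Z}
    (hb : b ∈ Subgroup.normalizer (N : Set (Perm Z)))
    (hbK : ∀ n ∈ N, b * n * b⁻¹ ∈ K ↔ n ∈ K) :
    b ∈ wprod ((fun τ : Perm Z => τ z₀) '' (K : Set (Perm Z))) := by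
  set X := (fun τ : Perm Z => τ z₀) '' (K : Set (Perm Z))
  obtain ⟨τ, hτ, hτz⟩ := hN.1 z₀ (b z₀)
  have hbX : ∀ z, b z ∈ X ↔ (z ∈ X ↔ τ ∈ K) := by
    intro z
    obtain ⟨n, hn, rfl⟩ := hN.1 z₀ z
    have hbn : b * n * b⁻¹ ∈ N := (Subgroup.mem_normalizer_iff.1 hb n).1 hn
    have hbz : b (n z₀) = (b * n * b⁻¹ * τ) z₀ := by simp [hτz]
    rw [hbz, hN.apply_mem_image_iff hKN z₀ (mul_mem hbn hτ), hN.apply_mem_image_iff hKN z₀ hn,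
      Subgroup.mul_mem_iff_of_relIndex_two hKidx hbn hτ, hbK n hn]
  rw [mem_wprod_iff_preimage]
  by_cases hτK : τ ∈ K
  · left; ext z; simp [hbX, hτK]
  · right; ext z; simp [hbX, hτK]

end IsRegularSubgroup

end

theorem normalizer_le_wprod_iff_characteristic_general {Z : Type*}
    (N K : Subgroup (Equiv.Perm Z)) (hN : IsRegularSubgroup N) (z₀ : Z)
    (hKN : K ≤ N) (hKidx : K.relIndex N = 2) (X : Set Z)
    (hX : X = (fun σ : Equiv.Perm Z => σ z₀) '' (K : Set (Equiv.Perm Z))) :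
    Subgroup.normalizer (N : Set (Equiv.Perm Z)) ≤ wprod X ↔ (K.subgroupOf N).Characteristic := by
  subst hX
  refine ⟨fun hle => Subgroup.characteristic_iff_le_comap.2 fun φ => ?_, fun hK b hb => ?_⟩
  · exact hN.subgroupOf_le_comap_of_permOfMulAut_mem_wprod hKN z₀ φ
      (hle (hN.permOfMulAut_mem_normalizer z₀ φ))
  · exact hN.mem_wprod_of_conj_mem_iff hKN hKidx z₀ hb fun n hn => hK.conj_mem_iff hb hn

/-- For a regular `N ≤ W(X,Y)` with `K ≤ N` of index 2 and `X = K · z₀`, the normalizer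
of `N` lies in `W(X,Y)` iff `K` is characteristic in `N`. -/
theorem normalizer_le_wprod_iff_characteristic {Z : Type*} [Fintype Z]
    (N K : Subgroup (Equiv.Perm Z)) (hN : IsRegularSubgroup N) (z₀ : Z)
    (hKN : K ≤ N) (hKidx : K.relIndex N = 2) (X : Set Z)
    (hX : X = (fun σ : Equiv.Perm Z => σ z₀) '' (K : Set (Equiv.Perm Z))) :
    Subgroup.normalizer (N : Set (Equiv.Perm Z)) ≤ wprod X ↔ (K.subgroupOf N).Characteristic :=
  normalizer_le_wprod_iff_characteristic_general N K hN z₀ hKN hKidx X hX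
end

section
/- For every integer n ≥ 3, there is exactly one subset X of (the underlying set of) D_n with 1 ∈ X, |X| = n, and Hol(D_n) = Norm_B(λ(D_n)) ≤ W(X, X^c); namely X = X_0 = {x^b : b ∈ ℤ/nℤ}, the set of rotations. That is, Hol(D_n) is a subgroup of W(X,Y) for a unique splitting {X,Y}, namely {X_0, Y_0}. -/
/-- `X₀`: the set of rotations in `D_n`. -/
def dihedralX0 (n : ℕ) : Set (DihedralGroup n) :=
  Set.range (DihedralGroup.r : ZMod n → DihedralGroup n)

/-- `X₁ = {x^b : b even} ∪ {t x^b : b even}`. -/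
def dihedralX1 (n : ℕ) : Set (DihedralGroup n) :=
  Set.range (fun c : ZMod n => DihedralGroup.r (2 * c)) ∪
    Set.range (fun c : ZMod n => DihedralGroup.sr (2 * c))

/-- `X₂ = {x^b : b even} ∪ {t x^b : b odd}`. -/
def dihedralX2 (n : ℕ) : Set (DihedralGroup n) :=
  Set.range (fun c : ZMod n => DihedralGroup.r (2 * c)) ∪
    Set.range (fun c : ZMod n => DihedralGroup.sr (2 * c + 1))

/-!
Every element of the holomorph `Norm(λ(G))` is a left translation composed with an automorphism.
A left translation maps an index-two subgroup `H` either onto itself or onto `Hᶜ`, and an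
automorphism fixes `H` if `H` is characteristic; so `Hol(G) ≤ W(H, Hᶜ)`. For `n ≥ 3` the rotations
form a characteristic subgroup of index two of `D_n`, since automorphisms preserve the order `n ≠ 2`
of `x`. Conversely, if `X ∋ 1` contained a reflection, then `X` would be stable under the
automorphisms `x ↦ x`, `t x^b ↦ t x^(b+c)` (they fix `1 ∈ X`), hence contain `1` and all `n`
reflections, too many for `|X| = n`.
-/

open DihedralGroup

local notation "Hol(" G ")" => Subgroup.normalizer (leftRegRange G : Set (Equiv.Perm G))

section Holomorph

variable {G : Type*} [Group G]

lemma mem_leftRegRange_iff {p : Equiv.Perm G} :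
    p ∈ leftRegRange G ↔ ∃ g : G, ∀ z, p z = g * z :=
  ⟨by rintro ⟨g, rfl⟩; exact ⟨g, fun _ => rfl⟩,
    fun ⟨g, hg⟩ => ⟨g, Equiv.ext fun z => (hg z).symm⟩⟩

lemma MulEquiv.toEquiv_mem_normalizer_leftRegRange (e : G ≃* G) :
    (e.toEquiv : Equiv.Perm G) ∈ Hol(G) := by
  refine Subgroup.mem_normalizer_iff.mpr fun p => ⟨?_, fun hp => ?_⟩
  · rintro ⟨g, rfl⟩
    refine mem_leftRegRange_iff.mpr ⟨e g, fun z => ?_⟩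
    simp
  · obtain ⟨g, hg⟩ := mem_leftRegRange_iff.mp hp
    refine mem_leftRegRange_iff.mpr ⟨e.symm g, fun z => ?_⟩
    simpa using congrArg e.symm (hg (e z))

/-- Conjugating `λ a` by `w` gives a translation `λ g`; evaluating at `1` shows `g = w a`. -/
lemma map_mul_of_mem_normalizer_leftRegRange {w : Equiv.Perm G}
    (hw : w ∈ Hol(G)) (h1 : w 1 = 1) (a b : G) :
    w (a * b) = w a * w b := by
  have hconj : w * MulAction.toPermHom G G a * w⁻¹ ∈ leftRegRange G :=
    (Subgroup.mem_normalizer_iff.mp hw _).mp ⟨a, rfl⟩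
  obtain ⟨g, hg⟩ := mem_leftRegRange_iff.mp hconj
  have hg' (z : G) : w (a * w⁻¹ z) = g * z := hg z
  have hwa : w a = g := by
    simpa [Equiv.Perm.inv_eq_iff_eq.mpr h1.symm] using hg' 1
  simpa [hwa] using hg' (w b)

lemma exists_eq_toPermHom_mul_mulEquiv_of_mem_normalizer_leftRegRange {w : Equiv.Perm G}
    (hw : w ∈ Hol(G)) :
    ∃ (g : G) (e : G ≃* G), w = MulAction.toPermHom G G g * e.toEquiv := by
  set tg := MulAction.toPermHom G G (w 1)
  have htg : tg ∈ Hol(G) := Subgroup.le_normalizer ⟨w 1, rfl⟩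
  have hw' : tg⁻¹ * w ∈ Hol(G) := mul_mem (inv_mem htg) hw
  have h1 : (tg⁻¹ * w) 1 = 1 := by simp [tg]
  exact ⟨w 1, MulEquiv.mk' (tg⁻¹ * w) (map_mul_of_mem_normalizer_leftRegRange hw' h1),
    (mul_inv_cancel_left tg w).symm⟩

end Holomorph

section Wprod

lemma image_eq_of_mem_wprod {Z : Type*} {X : Set Z} {w : Equiv.Perm Z} (hw : w ∈ wprod X)
    {z : Z} (hz : z ∈ X) (hwz : w z ∈ X) : w '' X = X := by
  rcases hw with ⟨hX, -⟩ | ⟨hX, -⟩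
  · exact hX
  · have hwz' : w z ∈ Xᶜ := hX ▸ Set.mem_image_of_mem w hz
    exact absurd hwz hwz'

variable {G : Type*} [Group G]

lemma toPermHom_mem_wprod_of_index_eq_two {H : Subgroup G} (hH : H.index = 2) (g : G) :
    MulAction.toPermHom G G g ∈ wprod (H : Set G) := by
  by_cases hg : g ∈ H
  · left
    constructor <;> ext z <;> simp [Subgroup.mul_mem_iff_of_index_two hH, hg]
  · right
    constructor <;> ext z <;> simp [Subgroup.mul_mem_iff_of_index_two hH, hg]

lemma MulEquiv.toEquiv_mem_wprod (H : Subgroup G) [H.Characteristic] (e : G ≃* G) :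
    (e.toEquiv : Equiv.Perm G) ∈ wprod (H : Set G) := by
  have hH : e.toEquiv '' H = H := by
    calc e.toEquiv '' H = (H.map e.toMonoidHom : Set G) := (H.coe_map e.toMonoidHom).symm
      _ = H := congrArg _ (Subgroup.characteristic_iff_map_eq.mp ‹_› e)
  exact Or.inl ⟨hH, by rw [Set.image_compl_eq e.toEquiv.bijective, hH]⟩

theorem normalizer_leftRegRange_le_wprod (H : Subgroup G) [H.Characteristic]
    (hH : H.index = 2) :
    Hol(G) ≤ wprod (H : Set G) := by
  intro w hw
  obtain ⟨g, e, rfl⟩ := exists_eq_toPermHom_mul_mulEquiv_of_mem_normalizer_leftRegRange hw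
  exact mul_mem (toPermHom_mem_wprod_of_index_eq_two hH g) (e.toEquiv_mem_wprod H)

end Wprod

namespace DihedralGroup

variable {n : ℕ}

def rotations (n : ℕ) : Subgroup (DihedralGroup n) :=
  Subgroup.zpowers (r 1)

lemma coe_rotations : (rotations n : Set (DihedralGroup n)) = dihedralX0 n := by
  ext z
  simp only [rotations, SetLike.mem_coe, Subgroup.mem_zpowers_iff, r_one_zpow, dihedralX0,
    Set.mem_range]
  cases z with
  | r a => exact ⟨fun _ => ⟨a, rfl⟩, fun _ => ⟨ZMod.cast a, by rw [ZMod.intCast_zmod_cast]⟩⟩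
  | sr a => simp

@[simp]
lemma r_mem_rotations (a : ZMod n) : r a ∈ rotations n := by
  rw [← SetLike.mem_coe, coe_rotations]
  exact ⟨a, rfl⟩

@[simp]
lemma sr_not_mem_rotations (a : ZMod n) : sr a ∉ rotations n := by
  rw [← SetLike.mem_coe, coe_rotations]
  rintro ⟨b, hb⟩
  cases hb

lemma index_rotations : (rotations n).index = 2 :=
  Subgroup.index_eq_two_iff.mpr ⟨sr 0, by rintro (a | a) <;> simp⟩

lemma characteristic_rotations (hn : n ≠ 2) : (rotations n).Characteristic := by
  refine Subgroup.characteristic_iff_map_le.mpr fun e => ?_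
  rw [rotations, MonoidHom.map_zpowers, Subgroup.zpowers_le]
  cases h : e.toMonoidHom (r 1) with
  | r a => exact r_mem_rotations a
  | sr a =>
    have horder := e.orderOf_eq (r 1)
    simp only [MulEquiv.coe_toMonoidHom] at h
    rw [h, orderOf_sr, orderOf_r_one] at horder
    exact absurd horder.symm hn

lemma ncard_dihedralX0 [NeZero n] : (dihedralX0 n).ncard = n := by
  rw [dihedralX0, Set.ncard_range_of_injective fun _ _ => r.inj, Nat.card_zmod]

def shiftReflections (c : ZMod n) : DihedralGroup n ≃* DihedralGroup n where
  toFun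
    | r a => r a
    | sr a => sr (a + c)
  invFun
    | r a => r a
    | sr a => sr (a - c)
  left_inv := by rintro (a | a) <;> simp
  right_inv := by rintro (a | a) <;> simp
  map_mul' := by
    rintro (a | a) (b | b) <;> simp only [r_mul_r, r_mul_sr, sr_mul_r, sr_mul_sr] <;>
      first | rfl | (congr 1; ring)

theorem eq_dihedralX0_of_forall_shiftReflections_mem [NeZero n] {X : Set (DihedralGroup n)}
    (h1 : 1 ∈ X) (hcard : X.ncard = n) (hX : ∀ c, ∀ z ∈ X, shiftReflections c z ∈ X) :
    X = dihedralX0 n := by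
  have hsub : X ⊆ dihedralX0 n := by
    rintro (a | b) hz
    · exact ⟨a, rfl⟩
    · have hsr : insert 1 (Set.range sr) ⊆ X := by
        rintro _ (rfl | ⟨a, rfl⟩)
        · exact h1
        · simpa [shiftReflections] using hX (a - b) _ hz
      have hle := Set.ncard_le_ncard hsr (Set.toFinite X)
      rw [Set.ncard_insert_of_notMem (by rintro ⟨a, ha⟩; cases ha) (Set.toFinite _),
        Set.ncard_range_of_injective fun _ _ => sr.inj, Nat.card_zmod, hcard] at hle
      omega
  exact Set.eq_of_subset_of_ncard_le hsub (by rw [ncard_dihedralX0, hcard]) (Set.toFinite _)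

end DihedralGroup

/-- `Hol(D_n) = Norm_B(λ(D_n))` lies in `W(X, Xᶜ)` for a unique splitting with
`1 ∈ X` and `|X| = n`, namely `X = X₀`, the set of rotations. -/
theorem hol_unique_splitting (n : ℕ) (hn : 3 ≤ n) :
    {X : Set (DihedralGroup n) | (1 : DihedralGroup n) ∈ X ∧ X.ncard = n ∧
        Subgroup.normalizer (leftRegRange (DihedralGroup n) : Set (Equiv.Perm (DihedralGroup n))) ≤ wprod X} = {dihedralX0 n} := by
  have : NeZero n := ⟨by omega⟩
  have := characteristic_rotations (n := n) (by omega)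
  ext X
  simp only [Set.mem_ofPred_eq, Set.mem_singleton_iff]
  refine ⟨fun ⟨h1, hcard, hle⟩ => ?_, ?_⟩
  · refine eq_dihedralX0_of_forall_shiftReflections_mem h1 hcard fun c z hz => ?_
    have hX := image_eq_of_mem_wprod
      (hle ((shiftReflections c).toEquiv_mem_normalizer_leftRegRange)) h1 (by simpa using h1)
    exact hX ▸ Set.mem_image_of_mem _ hz
  · rintro rfl
    refine ⟨⟨0, rfl⟩, ncard_dihedralX0, ?_⟩
    rw [← coe_rotations]
    exact normalizer_leftRegRange_le_wprod _ index_rotations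
end
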